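/- Let F, G be additive functors from the category of abelian groups to itself preserving filtered colimits, and let η : F ⟶ G be a natural transformation such that η_ℤ and η_{ℤ/n} (for all n ≥ 1) are isomorphisms. Then η_A is an isomorphism for every abelian group A. -/

import Mathlib

open CategoryTheory CategoryTheory.Limits

section Aux

variable (F G : AddCommGrpCat.{0} ⥤ AddCommGrpCat.{0}) (η : F ⟶ G)

lemma stmt8_iso_transfer {A B : AddCommGrpCat.{0}} (e : A ≅ B) (h : IsIso (η.app A)) :
    IsIso (η.app B) := by
  have heq : η.app B = F.map e.inv ≫ η.app A ≫ G.map e.hom := by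
    rw [← η.naturality, ← Category.assoc, ← F.map_comp, e.inv_hom_id, F.map_id, Category.id_comp]
  rw [heq]
  infer_instance

lemma stmt8_colimit {J : Type} [SmallCategory J] (K : J ⥤ AddCommGrpCat.{0})
    [PreservesColimit K F] [PreservesColimit K G]
    (h : ∀ j, IsIso (η.app (K.obj j))) : IsIso (η.app (colimit K)) := by
  haveI : ∀ j, IsIso ((Functor.whiskerLeft K η).app j) := h
  haveI : IsIso (Functor.whiskerLeft K η) := NatIso.isIso_of_isIso_app _
  have heq : η.app (colimit K) =
      (preservesColimitIso F K).hom ≫ colim.map (Functor.whiskerLeft K η) ≫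
        (preservesColimitIso G K).inv := by
    apply (isColimitOfPreserves F (colimit.isColimit K)).hom_ext
    intro j
    simp [ι_preservesColimitIso_hom_assoc, ι_colimMap_assoc, ι_preservesColimitIso_inv,
      η.naturality]
  rw [heq]
  infer_instance

lemma stmt8_biproduct [F.Additive] [G.Additive] {ι : Type} [Fintype ι]
    (f : ι → AddCommGrpCat.{0}) (h : ∀ i, IsIso (η.app (f i))) : IsIso (η.app (⨁ f)) := by
  haveI : PreservesColimit (Discrete.functor f) F :=
    preservesCoproduct_of_preservesBiproduct F
  haveI : PreservesColimit (Discrete.functor f) G :=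
    preservesCoproduct_of_preservesBiproduct G
  have hc : IsIso (η.app (colimit (Discrete.functor f))) :=
    stmt8_colimit F G η (Discrete.functor f) (fun j => h j.as)
  exact stmt8_iso_transfer F G η (biproduct.isoCoproduct f).symm hc

lemma stmt8_fg [F.Additive] [G.Additive]
    (hZ : IsIso (η.app (AddCommGrpCat.of ℤ)))
    (hZn : ∀ n : ℕ, 1 ≤ n → IsIso (η.app (AddCommGrpCat.of (ZMod n))))
    (A : Type) [AddCommGroup A] [AddGroup.FG A] : IsIso (η.app (AddCommGrpCat.of A)) := by
  obtain ⟨n, ι, fι, p, hp, e, ⟨g⟩⟩ := AddCommGroup.equiv_free_prod_directSum_zmod A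
  let f : Fin n ⊕ ι → AddCommGrpCat.{0} :=
    Sum.elim (fun _ => AddCommGrpCat.of ℤ) (fun i => AddCommGrpCat.of (ZMod (p i ^ e i)))
  have hf : ∀ j, IsIso (η.app (f j)) := by
    rintro (j | i)
    · exact hZ
    · exact hZn _ (Nat.one_le_iff_ne_zero.mpr (pow_ne_zero _ (hp i).pos.ne'))
  have hbi : IsIso (η.app (⨁ f)) := stmt8_biproduct F G η f hf
  -- build an isomorphism `⨁ f ≅ of A`
  have e2 : DirectSum ι (fun i => ZMod (p i ^ e i)) ≃+ ∀ i, ZMod (p i ^ e i) :=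
    { DFinsupp.equivFunOnFintype with
      map_add' := fun x y => by funext i; exact DFinsupp.add_apply x y i }
  have e3 : ((Fin n → ℤ) × ∀ i, ZMod (p i ^ e i)) ≃+ ∀ j, (f j : Type) :=
    { (Equiv.sumPiEquivProdPi fun j => (f j : Type)).symm with
      map_add' := fun x y => by funext j; cases j <;> rfl }
  have eA : A ≃+ ∀ j, (f j : Type) :=
    g.trans ((Finsupp.addEquivFunOnFinite.prodCongr e2).trans e3)
  have eiso : (⨁ f) ≅ AddCommGrpCat.of A :=
    (AddCommGrpCat.biproductIsoPi f).trans eA.symm.toAddCommGrpIso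
  exact stmt8_iso_transfer F G η eiso hbi

end Aux

/-- If a natural transformation between additive, filtered-colimit-preserving
endofunctors of abelian groups is an isomorphism at `ℤ` and at every `ℤ/n`
(`n ≥ 1`), then it is an isomorphism at every abelian group. -/
theorem stmt8 (F G : AddCommGrpCat.{0} ⥤ AddCommGrpCat.{0}) [F.Additive] [G.Additive]
    [PreservesFilteredColimits F] [PreservesFilteredColimits G] (η : F ⟶ G)
    (hZ : IsIso (η.app (AddCommGrpCat.of ℤ)))
    (hZn : ∀ n : ℕ, 1 ≤ n → IsIso (η.app (AddCommGrpCat.of (ZMod n)))) :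
    ∀ A : AddCommGrpCat.{0}, IsIso (η.app A) := by
  intro A
  classical
  -- present `A` as the filtered colimit of the subgroups generated by finite subsets
  let K : Finset A ⥤ AddCommGrpCat.{0} :=
    { obj := fun s => AddCommGrpCat.of (AddSubgroup.closure (s : Set A))
      map := fun {s t} h => AddCommGrpCat.ofHom
        (AddSubgroup.inclusion (AddSubgroup.closure_mono (Finset.coe_subset.mpr (leOfHom h))))
      map_id := fun s => by ext x; rfl
      map_comp := fun h₁ h₂ => by ext x; rfl }
  let c : Cocone K :=
    { pt := A
      ι := { app := fun s => AddCommGrpCat.ofHom (AddSubgroup.closure (s : Set A)).subtype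
             naturality := fun s t h => by ext x; rfl } }
  let t : colimit K ⟶ A := colimit.desc K c
  have hbij : Function.Bijective t := by
    constructor
    · rw [injective_iff_map_eq_zero]
      intro x hx
      obtain ⟨s, y, rfl⟩ := Concrete.colimit_exists_rep K x
      have hy : ((AddSubgroup.closure (s : Set A)).subtype : _ →+ A) y = 0 := by
        have h1 : (colimit.ι K s ≫ t) y = 0 := hx
        rwa [colimit.ι_desc] at h1
      have hy0 : y = 0 := Subtype.ext hy
      rw [hy0]
      exact map_zero (show ↥(K.obj s) →+ ↥(colimit K) from (colimit.ι K s).hom)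
    · intro a
      have ha : a ∈ AddSubgroup.closure (({a} : Finset A) : Set A) :=
        AddSubgroup.subset_closure (by simp)
      refine ⟨colimit.ι K ({a} : Finset A) ⟨a, ha⟩, ?_⟩
      have : (colimit.ι K ({a} : Finset A) ≫ t) ⟨a, ha⟩ = a := by
        rw [colimit.ι_desc]; rfl
      exact this
  haveI : IsIso t := by
    rw [ConcreteCategory.isIso_iff_bijective]; exact hbij
  have hcolim : IsIso (η.app (colimit K)) := by
    apply stmt8_colimit F G η K
    intro s
    exact stmt8_fg F G η hZ hZn (AddSubgroup.closure (s : Set A)) 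
  exact stmt8_iso_transfer F G η (asIso t) hcolim
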